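/- (Lemma 3) For all integers k, ℓ ≥ 1, the (k+1)×(k+1) determinant det( f(ℓ·i−1, x, q·s)^j · (−f(ℓ·i, x, s))^{k−j} )_{i,j=0}^{k} (row index i, column index j) equals (−1)^{binom(k+1,3)·ℓ} · s^{−binom(k+1,2) + binom(k+1,3)·ℓ} · q^{binom(k+1,3)·binom(ℓ,2) + binom(k+1,4)·ℓ^2} · ∏_{j=0}^{k−1} fac(k−j, x, q^{ℓ·j}·s, ℓ), where powers of s with possibly negative integer exponents are interpreted as integer powers of the nonzero field element s. -/

import Mathlib

open Finset

variable {K : Type*} [Field K]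

noncomputable def qFibPos (q x t : K) : ℕ → K
  | 0 => 0
  | 1 => 1
  | n + 2 => x * qFibPos q x t (n + 1) + q ^ n * t * qFibPos q x t n

noncomputable def qFibNeg (q x t : K) : ℕ → K
  | 0 => 0
  | 1 => q / t
  | m + 2 => (qFibNeg q x t m - x * qFibNeg q x t (m + 1)) * q ^ (m + 2) / t

/-- The Carlitz q-Fibonacci polynomial `f(n, x, t)` for `n : ℤ`, defined by `f 0 = 0`,
`f 1 = 1` and `f n = x * f (n-1) + q^(n-2) * t * f (n-2)`, solved backwards for `n < 0`. -/
noncomputable def qFib (q x t : K) : ℤ → K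
  | Int.ofNat n => qFibPos q x t n
  | Int.negSucc m => qFibNeg q x t (m + 1)

/-- `fac(k, x, t, m) = ∏_{i=1}^{k} f(i·m, x, t)`. -/
noncomputable def qFac (q x t : K) (k m : ℕ) : K :=
  ∏ i ∈ Finset.range k, qFib q x t (((i : ℤ) + 1) * m)

/-!
The matrix is the projective Vandermonde matrix of `a i = f(ℓi - 1, x, qs)` and
`b i = -f(ℓi, x, s)`, so its determinant is `∏_{i<j} (a j * b i - a i * b j)`. Each factor is
evaluated by the generalised Cassini identity
`t (f(m-1, x, qt) f(m+d, x, t) - f(m+d-1, x, qt) f(m, x, t)) = (-t)^m q^(m choose 2) f(d, x, q^m t)`,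
proved by a two-step induction on `d` whose case `d = 1` is the Cassini identity (an induction
on `m`). For fixed `i` the factors `f(ℓ(j-i), x, q^(ℓi) s)`, `j > i`, multiply to
`fac(k-i, x, q^(ℓi) s, ℓ)`, and the exponents of the prefactors add up by
`∑_{i ≤ k} (k-i) (i choose r) = (k+1 choose r+2)`.
-/

namespace Nat

theorem sum_range_choose_eq_choose_succ (n r : ℕ) :
    ∑ i ∈ range n, i.choose r = n.choose (r + 1) := by
  induction n with
  | zero => simp
  | succ n ih => rw [sum_range_succ, ih, choose_succ_succ', add_comm]

theorem sum_range_sub_mul_choose (k r : ℕ) :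
    ∑ i ∈ range (k + 1), (k - i) * i.choose r = (k + 1).choose (r + 2) := by
  induction k with
  | zero => simp [choose_eq_zero_of_lt (show 1 < r + 2 by omega)]
  | succ k ih =>
    have hsplit : ∀ i ∈ range (k + 1),
        (k + 1 - i) * i.choose r = (k - i) * i.choose r + i.choose r := by
      intro i hi
      rw [Nat.sub_add_comm (Nat.le_of_lt_succ (mem_range.1 hi))]
      ring
    rw [sum_range_succ, Nat.sub_self, zero_mul, add_zero, sum_congr rfl hsplit, sum_add_distrib,
      ih, sum_range_choose_eq_choose_succ, choose_succ_succ' (k + 1) (r + 1), add_comm]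

theorem choose_two_mul (a b : ℕ) : (a * b).choose 2 = a ^ 2 * b.choose 2 + a.choose 2 * b := by
  apply Nat.cast_injective (R := ℚ)
  push_cast [Nat.cast_choose_two]
  ring

end Nat

theorem Fin.prod_univ_prod_Ioi_eq_prod_range {M : Type*} [CommMonoid M] (n : ℕ)
    (g : ℕ → ℕ → M) :
    ∏ i : Fin n, ∏ j ∈ Ioi i, g i j =
      ∏ i ∈ range n, ∏ r ∈ range (n - (i + 1)), g i (i + 1 + r) := by
  rw [← Fin.prod_univ_eq_prod_range (fun i ↦ ∏ r ∈ range (n - (i + 1)), g i (i + 1 + r))]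
  refine prod_congr rfl fun i _ ↦ ?_
  rw [← prod_Ico_eq_prod_range, Ico_add_one_left_eq_Ioo, ← Fin.map_valEmbedding_Ioi, prod_map]
  rfl

section qFib

variable (q x t : K)

@[simp] lemma qFib_zero : qFib q x t 0 = 0 := rfl

@[simp] lemma qFib_one : qFib q x t 1 = 1 := rfl

@[simp] lemma qFib_neg_one : qFib q x t (-1) = q / t := rfl

lemma qFib_neg_natCast (m : ℕ) : qFib q x t (-m) = qFibNeg q x t m := by
  cases m <;> rfl

variable {q t}

theorem qFib_add_two (hq : q ≠ 0) (ht : t ≠ 0) (n : ℤ) :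
    qFib q x t (n + 2) = x * qFib q x t (n + 1) + q ^ n * t * qFib q x t n := by
  match n with
  | (n : ℕ) => exact_mod_cast qFibPos.eq_3 q x t n
  | -1 => simp [field]
  | .negSucc (m + 1) =>
    rw [show Int.negSucc (m + 1) = -(m + 2 : ℕ) from rfl,
      show -((m + 2 : ℕ) : ℤ) + 2 = -(m : ℕ) by push_cast; ring,
      show -((m + 2 : ℕ) : ℤ) + 1 = -(m + 1 : ℕ) by push_cast; ring,
      qFib_neg_natCast, qFib_neg_natCast, qFib_neg_natCast, qFibNeg, zpow_neg, zpow_natCast]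
    field_simp
    ring

theorem qFib_natCast_add_two (hq : q ≠ 0) (ht : t ≠ 0) (n : ℕ) :
    qFib q x t (n + 2) = x * qFib q x t (n + 1) + q ^ n * t * qFib q x t n := by
  simpa using qFib_add_two x hq ht n

theorem qFib_mul_natCast_add_one (hq : q ≠ 0) (ht : t ≠ 0) (n : ℕ) :
    qFib q x (q * t) (n + 1) =
      x * qFib q x (q * t) n + q ^ n * t * qFib q x (q * t) (n - 1) := by
  have h := qFib_add_two x hq (mul_ne_zero hq ht) (n - 1)
  rw [sub_add_cancel, show (n : ℤ) - 1 + 2 = n + 1 by ring, zpow_sub_one₀ hq, zpow_natCast] at h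
  rw [h]
  field_simp

theorem qFib_cassini (hq : q ≠ 0) (ht : t ≠ 0) (m : ℕ) :
    t * (qFib q x (q * t) (m - 1) * qFib q x t (m + 1) - qFib q x (q * t) m * qFib q x t m) =
      (-t) ^ m * q ^ m.choose 2 := by
  induction m with
  | zero => simp [field]
  | succ m ih =>
    push_cast
    rw [add_sub_cancel_right, add_assoc, one_add_one_eq_two, qFib_natCast_add_two x hq ht,
      qFib_mul_natCast_add_one x hq ht, Nat.choose_succ_succ', Nat.choose_one_right]
    linear_combination (-(q ^ m * t)) * ih

theorem qFib_cross (hq : q ≠ 0) (ht : t ≠ 0) (m d : ℕ) :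
    t * (qFib q x (q * t) (m - 1) * qFib q x t (m + d) -
        qFib q x (q * t) (m + d - 1) * qFib q x t m) =
      (-t) ^ m * q ^ m.choose 2 * qFib q x (q ^ m * t) d := by
  induction d using Nat.twoStepInduction with
  | zero => simp
  | one => simpa using qFib_cassini x hq ht m
  | more d ih₀ ih₁ =>
    have hB := qFib_natCast_add_two x hq ht (m + d)
    have hA := qFib_mul_natCast_add_one x hq ht (m + d)
    have hC := qFib_natCast_add_two x hq (mul_ne_zero (pow_ne_zero m hq) ht) d
    push_cast at hA hB hC ih₁ ⊢
    rw [← add_assoc, show (m : ℤ) + d + 2 - 1 = m + d + 1 by ring, hA, hB, hC]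
    rw [← add_assoc, add_sub_cancel_right] at ih₁
    linear_combination x * ih₁ + q ^ (m + d) * t * ih₀

theorem qFib_projVandermonde_factor (hq : q ≠ 0) (ht : t ≠ 0) (m d : ℕ) :
    qFib q x (q * t) (m + d - 1) * -qFib q x t m - qFib q x (q * t) (m - 1) * -qFib q x t (m + d) =
      t⁻¹ * ((-t) ^ m * q ^ m.choose 2) * qFib q x (q ^ m * t) d := by
  rw [mul_assoc, ← qFib_cross x hq ht m d]
  field_simp
  ring

end qFib

theorem prod_range_cassini_prefactor_pow {q s : K} (hs : s ≠ 0) (k ℓ : ℕ) :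
    ∏ i ∈ range (k + 1), (s⁻¹ * ((-s) ^ (ℓ * i) * q ^ (ℓ * i).choose 2)) ^ (k - i) =
      (-1 : K) ^ ((k + 1).choose 3 * ℓ) *
      s ^ (-((k + 1).choose 2 : ℤ) + ((k + 1).choose 3 : ℤ) * ℓ) *
      q ^ ((k + 1).choose 3 * ℓ.choose 2 + (k + 1).choose 4 * ℓ ^ 2) := by
  have h0 : ∑ i ∈ range (k + 1), (k - i) = (k + 1).choose 2 := by
    simpa using Nat.sum_range_sub_mul_choose k 0
  have h1 : ∑ i ∈ range (k + 1), ℓ * i * (k - i) = (k + 1).choose 3 * ℓ := by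
    simp_rw [← Nat.sum_range_sub_mul_choose k 1, sum_mul, Nat.choose_one_right]
    exact sum_congr rfl fun i _ ↦ by ring
  have h2 : ∑ i ∈ range (k + 1), (ℓ * i).choose 2 * (k - i) =
      (k + 1).choose 3 * ℓ.choose 2 + (k + 1).choose 4 * ℓ ^ 2 := by
    rw [← Nat.sum_range_sub_mul_choose k 1, ← Nat.sum_range_sub_mul_choose k 2, sum_mul, sum_mul,
      ← sum_add_distrib]
    refine sum_congr rfl fun i _ ↦ ?_
    rw [Nat.choose_two_mul, Nat.choose_one_right]
    ring
  simp only [neg_pow s, mul_pow, ← pow_mul, prod_mul_distrib, prod_pow_eq_pow_sum, h0, h1, h2]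
  rw [zpow_add₀ hs, zpow_neg, ← Nat.cast_mul, zpow_natCast, zpow_natCast, inv_pow]
  ring

theorem det_eval_lemma3_general (q x s : K) (hq : q ≠ 0) (hs : s ≠ 0)
    (k ℓ : ℕ) :
    Matrix.det (Matrix.of fun i j : Fin (k + 1) =>
        qFib q x (q * s) ((ℓ : ℤ) * (i : ℕ) - 1) ^ (j : ℕ) *
          (-qFib q x s ((ℓ : ℤ) * (i : ℕ))) ^ (k - (j : ℕ))) =
      (-1 : K) ^ ((k + 1).choose 3 * ℓ) *
      s ^ (-((k + 1).choose 2 : ℤ) + ((k + 1).choose 3 : ℤ) * ℓ) *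
      q ^ ((k + 1).choose 3 * ℓ.choose 2 + (k + 1).choose 4 * ℓ ^ 2) *
      ∏ j ∈ Finset.range k, qFac q x (q ^ (ℓ * j) * s) (k - j) ℓ := by
  set a : ℕ → K := fun i ↦ qFib q x (q * s) ((ℓ : ℤ) * i - 1)
  set b : ℕ → K := fun i ↦ -qFib q x s ((ℓ : ℤ) * i)
  have hproj : (Matrix.of fun i j : Fin (k + 1) => a i ^ (j : ℕ) * b i ^ (k - (j : ℕ))) =
      Matrix.projVandermonde (fun i ↦ a i) (fun i ↦ b i) := by
    ext i j
    simp [Matrix.projVandermonde_apply]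
  have hfactor (i r : ℕ) : a (i + 1 + r) * b i - a i * b (i + 1 + r) =
      s⁻¹ * ((-s) ^ (ℓ * i) * q ^ (ℓ * i).choose 2) *
        qFib q x (q ^ (ℓ * i) * s) (((r : ℤ) + 1) * ℓ) := by
    convert qFib_projVandermonde_factor x hq hs (ℓ * i) (ℓ * (r + 1)) using 5 <;> push_cast <;> ring
  have hrow (i : ℕ) :
      ∏ r ∈ range (k + 1 - (i + 1)), (a (i + 1 + r) * b i - a i * b (i + 1 + r)) =
        (s⁻¹ * ((-s) ^ (ℓ * i) * q ^ (ℓ * i).choose 2)) ^ (k - i) *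
          qFac q x (q ^ (ℓ * i) * s) (k - i) ℓ := by
    rw [Nat.add_sub_add_right, prod_congr rfl fun r _ ↦ hfactor i r, prod_mul_distrib,
      prod_const, card_range, qFac]
  rw [hproj, Matrix.det_projVandermonde, Fin.prod_univ_prod_Ioi_eq_prod_range (k + 1)
    (fun i j ↦ a j * b i - a i * b j), prod_congr rfl fun i _ ↦ hrow i, prod_mul_distrib,
    prod_range_cassini_prefactor_pow hs, prod_range_succ (fun i ↦ qFac q x _ (k - i) ℓ),
    Nat.sub_self, qFac, prod_range_zero, mul_one]

theorem det_eval_lemma3 (q x s : K) (hq : q ≠ 0) (hs : s ≠ 0)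
    (k ℓ : ℕ) (hk : 1 ≤ k) (hℓ : 1 ≤ ℓ) :
    Matrix.det (Matrix.of fun i j : Fin (k + 1) =>
        qFib q x (q * s) ((ℓ : ℤ) * (i : ℕ) - 1) ^ (j : ℕ) *
          (-qFib q x s ((ℓ : ℤ) * (i : ℕ))) ^ (k - (j : ℕ))) =
      (-1 : K) ^ ((k + 1).choose 3 * ℓ) *
      s ^ (-((k + 1).choose 2 : ℤ) + ((k + 1).choose 3 : ℤ) * ℓ) *
      q ^ ((k + 1).choose 3 * ℓ.choose 2 + (k + 1).choose 4 * ℓ ^ 2) *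
      ∏ j ∈ Finset.range k, qFac q x (q ^ (ℓ * j) * s) (k - j) ℓ :=
  det_eval_lemma3_general q x s hq hs k ℓ
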